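/- arXiv:1311.6148 — 2 statements merged into one kernel-verified Lean document; each statement's English description precedes it below -/
import Mathlib

section
/- Let A be a noncyclic finite group of automorphisms of a noncyclic finite abelian p-group G, with gcd(|A|, p) = 1. Then there exists a ∈ A such that [G,a] is not cyclic. -/
/-!
Suppose every `[G, a]` is cyclic and pass to the Frattini quotient `V = G / G^p`. If `a ∈ A` has
`[G, a] ≤ G^p`, then telescoping `a^m = 1` (with `m = |A|` prime to `p`) gives
`[G, a] = [G, a]^p`, so `[G, a] = 1`: thus `A` acts faithfully on `V`. For `1 ≠ a ∈ A` the image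
`[V, a]` of the cyclic group `[G, a]` then has order exactly `p`, and `[V, a] ≤ C_V(a)` is
impossible because it would make `a^p` trivial on `V`. If `a, b ≠ 1` have different centralizers,
comparing `[V, ab]` with `[V, a]` and `[V, b]` forces `[V, a] = [V, b]`. So either all nontrivial
elements share one centralizer, of index `p`, or they all share one `[V, a]`, of order `p`; either
way `A` acts faithfully on a group of order `p` and embeds in `(ZMod p)ˣ`.
-/

open Subgroup

namespace MonoidHom

variable {B V : Type*} [Group B] [Group V] (ρ : B →* MulAut V) (N : Subgroup V)

def restrictMulAut (hN : ∀ b, N.map (ρ b : V →* V) = N) : B →* MulAut N :=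
  MonoidHom.mk' (fun b => ((ρ b).subgroupMap N).trans (MulEquiv.subgroupCongr (hN b)))
    fun _ _ => by ext; simp

theorem restrictMulAut_eq_one_iff {hN : ∀ b, N.map (ρ b : V →* V) = N} {b : B} :
    ρ.restrictMulAut N hN b = 1 ↔ ∀ x ∈ N, ρ b x = x := by
  simp [MulEquiv.ext_iff, restrictMulAut, Subtype.ext_iff]

def quotientMulAut [N.Normal] (hN : ∀ b, N.map (ρ b : V →* V) = N) : B →* MulAut (V ⧸ N) :=
  MonoidHom.mk' (fun b => QuotientGroup.congr N N (ρ b) (hN b))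
    fun _ _ => by ext x; induction x using QuotientGroup.induction_on; simp

theorem quotientMulAut_eq_one_iff [N.Normal] {hN : ∀ b, N.map (ρ b : V →* V) = N} {b : B} :
    ρ.quotientMulAut N hN b = 1 ↔ ∀ x, x⁻¹ * ρ b x ∈ N := by
  simp only [MulEquiv.ext_iff, MulAut.one_apply]
  constructor
  · exact fun h x => QuotientGroup.eq.mp (h x).symm
  · intro h x
    induction x using QuotientGroup.induction_on with
    | H x => exact (QuotientGroup.eq.mpr (h x)).symm

end MonoidHom

theorem isCyclic_mulAut_of_card_eq_prime {C : Type*} [Group C] {p : ℕ} [Fact p.Prime]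
    (hC : Nat.card C = p) : IsCyclic (MulAut C) := by
  have : IsCyclic C := isCyclic_of_prime_card hC
  subst hC
  exact isCyclic_of_surjective (IsCyclic.mulAutMulEquiv C).symm.toMonoidHom
    (IsCyclic.mulAutMulEquiv C).symm.surjective

theorem Subgroup.eq_of_card_eq_prime_of_mem {G : Type*} [Group G] {p : ℕ} [Fact p.Prime]
    {H K : Subgroup G} (hH : Nat.card H = p) (hK : Nat.card K = p) {x : G} (hxH : x ∈ H)
    (hxK : x ∈ K) (hx : x ≠ 1) : H = K := by
  have key : ∀ {L : Subgroup G}, Nat.card L = p → x ∈ L → zpowers x = L := fun {L} hL hxL => by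
    have : Finite L := Nat.finite_of_card_ne_zero (hL ▸ (Fact.out : p.Prime).ne_zero)
    have hord : orderOf x = p :=
      ((Fact.out : p.Prime).eq_one_or_self_of_dvd _ (hL ▸ L.orderOf_dvd_natCard hxL)).resolve_left
        (fun h => hx (orderOf_eq_one_iff.mp h))
    exact eq_of_le_of_card_ge (zpowers_le.mpr hxL) (by rw [hL, Nat.card_zpowers, hord])
  rw [← key hH hxH, key hK hxK]

theorem IsPGroup.subsingleton_of_forall_exists_pow_eq {p : ℕ} [Fact p.Prime] {H : Type*}
    [Group H] [Finite H] (hH : IsPGroup p H) (hpow : ∀ x : H, ∃ y, y ^ p = x) :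
    Subsingleton H := by
  by_contra hnt
  rw [not_subsingleton_iff_nontrivial, hH.nontrivial_iff_card] at hnt
  obtain ⟨n, hn, hcard⟩ := hnt
  obtain ⟨x, hx⟩ := exists_prime_orderOf_dvd_card' p (hcard ▸ dvd_pow_self p hn.ne')
  have hinj : Function.Injective (fun y : H => y ^ p) :=
    Finite.injective_iff_surjective.mpr fun x => hpow x
  have : x = 1 := hinj (by simp only [one_pow, ← hx, pow_orderOf_eq_one])
  exact (Fact.out : p.Prime).one_lt.ne' (hx ▸ this ▸ orderOf_one)

theorem map_range_powMonoidHom {G : Type*} [CommGroup G] (σ : MulAut G) (n : ℕ) :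
    (powMonoidHom n : G →* G).range.map (σ : G →* G) = (powMonoidHom n).range := by
  ext y
  constructor
  · rintro ⟨_, ⟨x, rfl⟩, rfl⟩
    exact ⟨σ x, by simp⟩
  · rintro ⟨x, rfl⟩
    exact ⟨_, ⟨σ.symm x, rfl⟩, by simp⟩

namespace MulAut

variable {V : Type*} [CommGroup V]

/-- Its range is `[V, σ]` and its kernel is `C_V(σ)`. -/
def commutatorHom (σ : MulAut V) : V →* V :=
  MonoidHom.mk' (fun x => x⁻¹ * σ x) fun x y => by
    simp only [map_mul, mul_inv]
    exact mul_mul_mul_comm _ _ _ _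

@[simp]
theorem commutatorHom_apply (σ : MulAut V) (x : V) : σ.commutatorHom x = x⁻¹ * σ x := rfl

theorem mem_ker_commutatorHom {σ : MulAut V} {x : V} : x ∈ σ.commutatorHom.ker ↔ σ x = x := by
  rw [MonoidHom.mem_ker, commutatorHom_apply, inv_mul_eq_one, eq_comm]

theorem commutatorHom_mul_apply (σ τ : MulAut V) (x : V) :
    (σ * τ).commutatorHom x = σ.commutatorHom x * σ (τ.commutatorHom x) := by
  simp only [commutatorHom_apply, mul_apply, map_mul, map_inv]
  group

theorem commutatorHom_map_apply (σ : MulAut V) (x : V) :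
    σ.commutatorHom (σ x) = σ (σ.commutatorHom x) := by
  simp only [commutatorHom_apply, map_mul, map_inv]

theorem ker_commutatorHom_inv (σ : MulAut V) : σ⁻¹.commutatorHom.ker = σ.commutatorHom.ker := by
  ext x
  rw [mem_ker_commutatorHom, mem_ker_commutatorHom, inv_def, MulEquiv.symm_apply_eq, eq_comm]

theorem map_range_commutatorHom (σ : MulAut V) :
    σ.commutatorHom.range.map (σ : V →* V) = σ.commutatorHom.range := by
  ext y
  constructor
  · rintro ⟨_, ⟨x, rfl⟩, rfl⟩
    exact ⟨σ x, commutatorHom_map_apply σ x⟩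
  · rintro ⟨x, rfl⟩
    refine ⟨_, ⟨σ.symm x, rfl⟩, ?_⟩
    rw [MonoidHom.coe_coe, ← commutatorHom_map_apply, MulEquiv.apply_symm_apply]

theorem map_ker_commutatorHom (σ : MulAut V) :
    σ.commutatorHom.ker.map (σ : V →* V) = σ.commutatorHom.ker := by
  ext y
  constructor
  · rintro ⟨x, hx, rfl⟩
    rwa [MonoidHom.coe_coe, mem_ker_commutatorHom.mp hx]
  · intro hy
    exact ⟨y, hy, mem_ker_commutatorHom.mp hy⟩

theorem closure_eq_range_commutatorHom (σ : MulAut V) :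
    closure {x : V | ∃ g : V, x = g⁻¹ * σ g} = σ.commutatorHom.range := by
  rw [← σ.commutatorHom.range.closure_eq]
  congr 1
  ext x
  simp [eq_comm]

theorem pow_apply_of_range_le_ker {σ : MulAut V} (h : σ.commutatorHom.range ≤ σ.commutatorHom.ker)
    (k : ℕ) (x : V) : (σ ^ k) x = x * σ.commutatorHom x ^ k := by
  induction k with
  | zero => simp
  | succ k ih =>
    have hfix : σ (σ.commutatorHom x) = σ.commutatorHom x := mem_ker_commutatorHom.mp (h ⟨x, rfl⟩)
    rw [pow_succ', mul_apply, ih, map_mul, map_pow, hfix, pow_succ', ← mul_assoc,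
      commutatorHom_apply, mul_inv_cancel_left]

theorem inv_mul_pow_apply (σ : MulAut V) (k : ℕ) (x : V) :
    x⁻¹ * (σ ^ k) x = σ.commutatorHom (∏ j ∈ Finset.range k, (σ ^ j) x) := by
  induction k with
  | zero => simp
  | succ k ih =>
    rw [Finset.prod_range_succ, map_mul, ← ih, pow_succ', mul_apply, commutatorHom_apply]
    group

theorem exists_commutatorHom_pow_eq {σ : MulAut V} {m : ℕ} (hσ : σ ^ m = 1) (g : V) :
    ∃ h, σ.commutatorHom g ^ m = σ.commutatorHom (σ.commutatorHom h) := by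
  have hstep : ∀ j, (σ ^ j) g = g * σ.commutatorHom (∏ i ∈ Finset.range j, (σ ^ i) g) :=
    fun j => by rw [← inv_mul_pow_apply, mul_inv_cancel_left]
  have hnorm : (∏ j ∈ Finset.range m, (σ ^ j) g) =
      g ^ m * σ.commutatorHom (∏ j ∈ Finset.range m, ∏ i ∈ Finset.range j, (σ ^ i) g) := by
    rw [Finset.prod_congr rfl fun j _ => hstep j, Finset.prod_mul_distrib, Finset.prod_const,
      Finset.card_range, map_prod]
  have hfix : σ.commutatorHom (∏ j ∈ Finset.range m, (σ ^ j) g) = 1 := by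
    rw [← inv_mul_pow_apply, hσ, one_apply, inv_mul_cancel]
  refine ⟨(∏ j ∈ Finset.range m, ∏ i ∈ Finset.range j, (σ ^ i) g)⁻¹, ?_⟩
  rw [hnorm, map_mul, map_pow, mul_eq_one_iff_eq_inv] at hfix
  rw [hfix, map_inv, map_inv]

theorem eq_one_of_range_commutatorHom_le {p : ℕ} [Fact p.Prime] {G : Type*} [CommGroup G]
    [Finite G] (hG : IsPGroup p G) {σ : MulAut G} {m : ℕ} (hσ : σ ^ m = 1) (hm : m.Coprime p)
    (h : σ.commutatorHom.range ≤ (powMonoidHom p).range) : σ = 1 := by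
  set W := σ.commutatorHom.range
  have hWm : (Nat.card W).Coprime m := by
    obtain ⟨k, hk⟩ := IsPGroup.iff_card.mp (hG.to_subgroup W)
    exact hk ▸ Nat.Coprime.pow_left k hm.symm
  have hpow : ∀ w : W, ∃ v : W, v ^ p = w := by
    intro w
    obtain ⟨⟨_, g, rfl⟩, hv⟩ := (powCoprime hWm).surjective w
    obtain ⟨h', hh'⟩ := σ.exists_commutatorHom_pow_eq hσ g
    obtain ⟨x, hx⟩ := h ⟨h', rfl⟩
    refine ⟨⟨σ.commutatorHom x, x, rfl⟩, Subtype.ext ?_⟩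
    rw [← hv]
    simp only [powCoprime, Equiv.coe_fn_mk, SubgroupClass.coe_pow, hh', ← hx, powMonoidHom_apply,
      map_pow]
  have hW : Subsingleton W := (hG.to_subgroup W).subsingleton_of_forall_exists_pow_eq hpow
  ext g
  have : σ.commutatorHom g = 1 := congrArg Subtype.val (Subsingleton.elim (⟨_, g, rfl⟩ : W) 1)
  rwa [commutatorHom_apply, inv_mul_eq_one, eq_comm] at this

end MulAut

theorem MonoidHom.range_commutatorHom_quotientMulAut {B V : Type*} [Group B] [CommGroup V]
    (ρ : B →* MulAut V) (N : Subgroup V) {hN : ∀ b, N.map (ρ b : V →* V) = N} (b : B) :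
    (ρ.quotientMulAut N hN b).commutatorHom.range =
      (ρ b).commutatorHom.range.map (QuotientGroup.mk' N) := by
  ext y
  constructor
  · rintro ⟨x, rfl⟩
    induction x using QuotientGroup.induction_on with
    | H x => exact ⟨_, ⟨x, rfl⟩, rfl⟩
  · rintro ⟨_, ⟨x, rfl⟩, rfl⟩
    exact ⟨x, rfl⟩

section FaithfulAction

open MulAut

variable {p : ℕ} [Fact p.Prime] {B V : Type*} [Group B] [CommGroup V] {ρ : B →* MulAut V}

theorem not_ker_commutatorHom_le [Finite V]
    (hcard : ∀ b ≠ 1, Nat.card (ρ b).commutatorHom.range = p) {a b : B} (ha : a ≠ 1) (hb : b ≠ 1)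
    (hne : (ρ a).commutatorHom.ker ≠ (ρ b).commutatorHom.ker) :
    ¬ (ρ a).commutatorHom.ker ≤ (ρ b).commutatorHom.ker := fun hle => by
  have hV : ∀ {c : B}, c ≠ 1 → Nat.card V = p * Nat.card (ρ c).commutatorHom.ker :=
    fun {c} hc => by
      rw [card_eq_card_quotient_mul_card_subgroup (ρ c).commutatorHom.ker, ← hcard _ hc,
        Nat.card_congr (QuotientGroup.quotientKerEquivRange _).toEquiv]
  exact hne (eq_of_le_of_card_ge hle
    (Nat.eq_of_mul_eq_mul_left (Fact.out : p.Prime).pos ((hV hb).symm.trans (hV ha))).le)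

theorem range_commutatorHom_eq_of_ker_ne [Finite V]
    (hcard : ∀ b ≠ 1, Nat.card (ρ b).commutatorHom.range = p) {a b : B} (ha : a ≠ 1) (hb : b ≠ 1)
    (hne : (ρ a).commutatorHom.ker ≠ (ρ b).commutatorHom.ker) :
    (ρ a).commutatorHom.range = (ρ b).commutatorHom.range := by
  obtain ⟨u, hua, hub⟩ := SetLike.not_le_iff_exists.mp (not_ker_commutatorHom_le hcard ha hb hne)
  obtain ⟨w, hwb, hwa⟩ :=
    SetLike.not_le_iff_exists.mp (not_ker_commutatorHom_le hcard hb ha (Ne.symm hne))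
  have hab : a * b ≠ 1 := fun h => hne <| by
    rw [← inv_eq_of_mul_eq_one_right h, map_inv, ker_commutatorHom_inv]
  have hu : (ρ (a * b)).commutatorHom u = ρ a ((ρ b).commutatorHom u) := by
    rw [map_mul, commutatorHom_mul_apply, hua, one_mul]
  have hw : (ρ (a * b)).commutatorHom w = (ρ a).commutatorHom w := by
    rw [map_mul, commutatorHom_mul_apply, hwb, map_one, mul_one]
  have hab_eq : (ρ (a * b)).commutatorHom.range = (ρ a).commutatorHom.range :=
    eq_of_card_eq_prime_of_mem (hcard _ hab) (hcard a ha) (hw ▸ ⟨w, rfl⟩) ⟨w, rfl⟩ hwa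
  have hmem : (ρ b).commutatorHom u ∈ (ρ a).commutatorHom.range := by
    have : ρ a ((ρ b).commutatorHom u) ∈ ((ρ a).commutatorHom.range).map (ρ a : V →* V) := by
      rw [map_range_commutatorHom, ← hab_eq, ← hu]
      exact ⟨u, rfl⟩
    obtain ⟨y, hy, hya⟩ := this
    rw [MonoidHom.coe_coe] at hya
    rwa [(ρ a).injective hya] at hy
  exact eq_of_card_eq_prime_of_mem (hcard a ha) (hcard b hb) hmem ⟨u, rfl⟩ hub

theorem isCyclic_of_forall_ker_commutatorHom_eq
    (hcard : ∀ b ≠ 1, Nat.card (ρ b).commutatorHom.range = p)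
    (hfaith : ∀ b, (ρ b).commutatorHom.range ≤ (ρ b).commutatorHom.ker → b = 1)
    {a : B} (ha : a ≠ 1) (hker : ∀ b ≠ 1, (ρ b).commutatorHom.ker = (ρ a).commutatorHom.ker) :
    IsCyclic B := by
  have hK : ∀ b, (ρ a).commutatorHom.ker.map (ρ b : V →* V) = (ρ a).commutatorHom.ker := by
    intro b
    rcases eq_or_ne b 1 with rfl | hb
    · rw [map_one, MulAut.one_def, MulEquiv.coe_monoidHom_refl, map_id]
    · rw [← hker b hb, map_ker_commutatorHom]
  have : IsCyclic (MulAut (V ⧸ (ρ a).commutatorHom.ker)) := isCyclic_mulAut_of_card_eq_prime <|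
    (Nat.card_congr (QuotientGroup.quotientKerEquivRange _).toEquiv).trans (hcard a ha)
  refine isCyclic_of_injective (ρ.quotientMulAut _ hK) ((injective_iff_map_eq_one _).mpr ?_)
  intro b hb
  by_contra hb1
  refine hb1 (hfaith b ?_)
  rw [hker b hb1]
  rintro _ ⟨x, rfl⟩
  exact (ρ.quotientMulAut_eq_one_iff _).mp hb x

theorem isCyclic_of_forall_range_commutatorHom_eq
    (hcard : ∀ b ≠ 1, Nat.card (ρ b).commutatorHom.range = p)
    (hfaith : ∀ b, (ρ b).commutatorHom.range ≤ (ρ b).commutatorHom.ker → b = 1)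
    {a : B} (ha : a ≠ 1)
    (hrange : ∀ b ≠ 1, (ρ b).commutatorHom.range = (ρ a).commutatorHom.range) :
    IsCyclic B := by
  have hL : ∀ b, (ρ a).commutatorHom.range.map (ρ b : V →* V) = (ρ a).commutatorHom.range := by
    intro b
    rcases eq_or_ne b 1 with rfl | hb
    · rw [map_one, MulAut.one_def, MulEquiv.coe_monoidHom_refl, map_id]
    · rw [← hrange b hb, map_range_commutatorHom]
  have : IsCyclic (MulAut (ρ a).commutatorHom.range) :=
    isCyclic_mulAut_of_card_eq_prime (hcard a ha)
  refine isCyclic_of_injective (ρ.restrictMulAut _ hL) ((injective_iff_map_eq_one _).mpr ?_)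
  intro b hb
  by_contra hb1
  refine hb1 (hfaith b fun x hx => ?_)
  rw [hrange b hb1] at hx
  exact mem_ker_commutatorHom.mpr ((ρ.restrictMulAut_eq_one_iff _).mp hb x hx)

theorem isCyclic_of_card_range_commutatorHom_eq [Finite V]
    (hcard : ∀ b ≠ 1, Nat.card (ρ b).commutatorHom.range = p)
    (hfaith : ∀ b, (ρ b).commutatorHom.range ≤ (ρ b).commutatorHom.ker → b = 1) :
    IsCyclic B := by
  by_cases htriv : ∀ b : B, b = 1
  · have : Subsingleton B := ⟨fun x y => (htriv x).trans (htriv y).symm⟩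
    exact isCyclic_of_subsingleton
  push Not at htriv
  obtain ⟨a, ha⟩ := htriv
  by_cases hker : ∀ b ≠ 1, (ρ b).commutatorHom.ker = (ρ a).commutatorHom.ker
  · exact isCyclic_of_forall_ker_commutatorHom_eq hcard hfaith ha hker
  push Not at hker
  obtain ⟨b, hb, hba⟩ := hker
  refine isCyclic_of_forall_range_commutatorHom_eq hcard hfaith ha fun c hc => ?_
  by_cases hca : (ρ c).commutatorHom.ker = (ρ a).commutatorHom.ker
  · rw [range_commutatorHom_eq_of_ker_ne hcard hc hb (hca ▸ hba.symm),
      range_commutatorHom_eq_of_ker_ne hcard hb ha hba]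
  · exact range_commutatorHom_eq_of_ker_ne hcard hc ha hca

end FaithfulAction

theorem isCyclic_of_forall_isCyclic_closure {p : ℕ} [Fact p.Prime] {G : Type*} [CommGroup G]
    [Finite G] (hG : IsPGroup p G) (A : Subgroup (MulAut G)) (hcop : (Nat.card A).Coprime p)
    (hcyc : ∀ a ∈ A, IsCyclic (closure {x : G | ∃ g : G, x = g⁻¹ * a g})) : IsCyclic A := by
  set ρ := A.subtype.quotientMulAut (powMonoidHom p).range fun a => map_range_powMonoidHom _ _
  have hρ : ∀ a, ρ a = 1 → a = 1 := fun a ha => Subtype.ext <|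
    MulAut.eq_one_of_range_commutatorHom_le hG
      (by rw [← Subgroup.coe_pow, pow_card_eq_one', Subgroup.coe_one]) hcop
      (by rintro _ ⟨x, rfl⟩; exact (A.subtype.quotientMulAut_eq_one_iff _).mp ha x)
  have hexp : ∀ y : G ⧸ (powMonoidHom p).range, y ^ p = 1 := fun y => by
    induction y using QuotientGroup.induction_on with
    | H x => exact (QuotientGroup.eq_one_iff _).mpr ⟨x, rfl⟩
  refine isCyclic_of_card_range_commutatorHom_eq (ρ := ρ) (p := p) (fun a ha => ?_) fun a ha => ?_
  · have : IsCyclic (ρ a).commutatorHom.range := by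
      rw [MonoidHom.range_commutatorHom_quotientMulAut, ← MulAut.closure_eq_range_commutatorHom]
      have : IsCyclic (closure {x : G | ∃ g, x = g⁻¹ * A.subtype a g}) := hcyc a a.2
      exact isCyclic_of_surjective _ (MonoidHom.subgroupMap_surjective _ _)
    have hdvd : Nat.card (ρ a).commutatorHom.range ∣ p := by
      rw [← IsCyclic.exponent_eq_card]
      exact Monoid.exponent_dvd_of_forall_pow_eq_one fun y => Subtype.ext (hexp y)
    refine ((Fact.out : p.Prime).eq_one_or_self_of_dvd _ hdvd).resolve_left
      fun h1 => ha (hρ a (MulEquiv.ext fun y => ?_))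
    have := Subgroup.card_eq_one.mp h1 ▸ MonoidHom.mem_range.mpr ⟨y, rfl⟩
    rwa [mem_bot, MulAut.commutatorHom_apply, inv_mul_eq_one, eq_comm] at this
  · have hp : ρ (a ^ p) = 1 := by
      ext y
      rw [map_pow, MulAut.pow_apply_of_range_le_ker ha, hexp, mul_one, MulAut.one_apply]
    have h1 : orderOf a ∣ 1 := hcop ▸ Nat.dvd_gcd (orderOf_dvd_natCard a)
      (orderOf_dvd_of_pow_eq_one (hρ _ hp))
    exact orderOf_eq_one_iff.mp (Nat.dvd_one.mp h1)

theorem stmt_7_general (p : ℕ) [Fact p.Prime] (G : Type*) [CommGroup G] [Finite G]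
    (hG : IsPGroup p G)
    (A : Subgroup (MulAut G)) (hAnc : ¬ IsCyclic A)
    (hcop : (Nat.card A).Coprime p) :
    ∃ a ∈ A, ¬ IsCyclic (Subgroup.closure {x : G | ∃ g : G, x = g⁻¹ * a g}) := by
  by_contra! hcyc
  exact hAnc (isCyclic_of_forall_isCyclic_closure hG A hcop hcyc)

theorem stmt_7 (p : ℕ) [Fact p.Prime] (G : Type*) [CommGroup G] [Finite G]
    (hG : IsPGroup p G) (hGnc : ¬ IsCyclic G)
    (A : Subgroup (MulAut G)) (hAnc : ¬ IsCyclic A)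
    (hcop : (Nat.card A).Coprime p) :
    ∃ a ∈ A, ¬ IsCyclic (Subgroup.closure {x : G | ∃ g : G, x = g⁻¹ * a g}) :=
  stmt_7_general p G hG A hAnc hcop
end

section
/- There is a function f : ℕ → ℕ such that every finite group G covered by m cyclic subgroups has a normal subgroup Δ with |Δ| ≤ f(m) and G/Δ cyclic. -/
/-!
Let `G` be covered by cyclic subgroups `C₁, …, Cₘ`. An element `x` lying in every `Cᵢ` of index
at most `2m` is central: otherwise its centralizer, a proper subgroup containing all those `Cᵢ`,
together with the `Cᵢ` of index `> 2m` would cover `G`, against B. H. Neumann's inequality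
`∑ 1 / [G : Hₖ] ≥ 1` for a covering by subgroups. Hence `[G : Z(G)] ≤ (2m)^m`, so `G` has at most
`[G : Z(G)]²` commutators and Schur's theorem bounds `|G'|` in terms of `m`.

The images of the `Cᵢ` cover the abelianization `A = G / G'`, so one of them, `D`, has index
`n ≤ m`. Take for `Δ` the kernel of `g ↦ (g G')ⁿ`: its image lies in the cyclic group `D`, and
`|Δ| = |G'| · |A[n]| ≤ |G'| · n²`, since the `n`-torsion `A[n]` meets the cyclic group `D` in at
most `n` elements.
-/

open scoped commutatorElement Pointwise

namespace Subgroup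

variable {G : Type*} [Group G]

theorem exists_index_le_card_of_cover {ι : Type*} [Fintype ι] {H : ι → Subgroup G}
    (hcov : ∀ g, ∃ i, g ∈ H i) : ∃ i, (H i).index ≤ Fintype.card ι := by
  have hH : ⋃ i ∈ (Finset.univ : Finset ι), (1 : G) • (H i : Set G) = Set.univ := by
    refine Set.eq_univ_of_forall fun g => ?_
    simpa using hcov g
  obtain ⟨i, -, -, hi⟩ := exists_index_le_card_of_leftCoset_cover hH
  exact ⟨i, hi⟩

theorem eq_top_of_cover_of_two_mul_card_lt_index {ι : Type*} [Fintype ι] {T : Subgroup G}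
    {H : ι → Subgroup G} (hH : ∀ i, 2 * Fintype.card ι < (H i).index)
    (hcov : ∀ g, g ∈ T ∨ ∃ i, g ∈ H i) : T = ⊤ := by
  by_contra hT
  set m := Fintype.card ι
  let K : Option ι → Subgroup G := fun k => k.elim T H
  have hK : ⋃ k ∈ (Finset.univ : Finset (Option ι)), (1 : G) • (K k : Set G) = Set.univ := by
    refine Set.eq_univ_of_forall fun g => ?_
    simp only [Finset.mem_univ, Set.iUnion_true, one_smul, Set.mem_iUnion, SetLike.mem_coe]
    rcases hcov g with hg | ⟨i, hg⟩
    exacts [⟨none, hg⟩, ⟨some i, hg⟩]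
  have hsum := one_le_sum_inv_index_of_leftCoset_cover hK
  simp only [Fintype.sum_option, K, Option.elim] at hsum
  have hT2 : (T.index : ℚ)⁻¹ ≤ 2⁻¹ := by
    rcases eq_or_ne T.index 0 with h0 | h0
    · simp [h0]
    · have : Finite (G ⧸ T) := Nat.finite_of_card_ne_zero h0
      have := one_lt_index_of_ne_top hT
      gcongr
      exact_mod_cast this
  have hHi : ∀ i, ((H i).index : ℚ)⁻¹ ≤ (2 * (m : ℚ) + 1)⁻¹ := fun i => by
    gcongr
    exact_mod_cast hH i
  have hbig : ∑ i, ((H i).index : ℚ)⁻¹ ≤ m * (2 * (m : ℚ) + 1)⁻¹ := by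
    simpa using Finset.sum_le_sum fun i (_ : i ∈ Finset.univ) => hHi i
  have hm : (m : ℚ) * (2 * m + 1 : ℚ)⁻¹ < 2⁻¹ := by
    rw [← div_eq_mul_inv, div_lt_iff₀ (by positivity)]
    linarith
  linarith

theorem index_center_le_of_cover [Finite G] {ι : Type*} [Fintype ι] {H : ι → Subgroup G}
    [∀ i, IsMulCommutative (H i)] (hcov : ∀ g, ∃ i, g ∈ H i) :
    (center G).index ≤ (2 * Fintype.card ι) ^ Fintype.card ι := by
  classical
  set m := Fintype.card ι
  let S := {i // (H i).index ≤ 2 * m}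
  have hle : ⨅ i : S, H i.1 ≤ center G := by
    intro x hx
    have hxS : ∀ i : S, x ∈ H i := mem_iInf.mp hx
    have hcent : centralizer {x} = ⊤ := by
      refine eq_top_of_cover_of_two_mul_card_lt_index
        (H := fun i : {i // ¬(H i).index ≤ 2 * m} => H i) (fun i => ?_) (fun g => ?_)
      · have := Fintype.card_subtype_le fun i => ¬(H i).index ≤ 2 * m
        have := i.2
        omega
      · obtain ⟨i, hg⟩ := hcov g
        by_cases hi : (H i).index ≤ 2 * m
        · exact .inl <| mem_centralizer_singleton_iff.mpr <|
            congrArg Subtype.val (mul_comm' (⟨g, hg⟩ : H i) ⟨x, hxS ⟨i, hi⟩⟩)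
        · exact .inr ⟨⟨i, hi⟩, hg⟩
    exact mem_center_iff.mpr fun g => mem_centralizer_singleton_iff.mp (hcent ▸ mem_top g)
  have hm : 1 ≤ 2 * m := by
    have : Nonempty ι := ⟨(hcov 1).choose⟩
    have := Fintype.card_pos (α := ι)
    omega
  calc (center G).index ≤ (⨅ i : S, H i.1).index := index_antitone hle
    _ ≤ ∏ i : S, (H i.1).index := index_iInf_le _
    _ ≤ ∏ _i : S, 2 * m := Finset.prod_le_prod' fun i _ => i.2
    _ = (2 * m) ^ Fintype.card S := by rw [Finset.prod_const, Finset.card_univ]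
    _ ≤ (2 * m) ^ m := Nat.pow_le_pow_right hm (Fintype.card_subtype_le _)

theorem commutatorElement_mul_of_mem_center {a b z w : G} (hz : z ∈ center G) (hw : w ∈ center G) :
    ⁅a * z, b * w⁆ = ⁅a, b⁆ := by
  rw [mem_center_iff] at hz hw
  calc ⁅a * z, b * w⁆ = a * (z * (b * w)) * z⁻¹ * a⁻¹ * w⁻¹ * b⁻¹ := by group
    _ = a * b * (w * a⁻¹) * w⁻¹ * b⁻¹ := by rw [← hz (b * w)]; group
    _ = ⁅a, b⁆ := by rw [← hw a⁻¹]; group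

theorem card_commutatorSet_le_index_center_sq [(center G).FiniteIndex] :
    Nat.card (commutatorSet G) ≤ (center G).index ^ 2 := by
  have hsurj : Function.Surjective fun p : (G ⧸ center G) × (G ⧸ center G) =>
      (⟨⁅p.1.out, p.2.out⁆, p.1.out, p.2.out, rfl⟩ : commutatorSet G) := by
    rintro ⟨-, a, b, rfl⟩
    refine ⟨(a, b), Subtype.ext ?_⟩
    obtain ⟨z, hz⟩ := QuotientGroup.mk_out_eq_mul (center G) a
    obtain ⟨w, hw⟩ := QuotientGroup.mk_out_eq_mul (center G) b
    simp only [hz, hw]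
    exact commutatorElement_mul_of_mem_center z.2 w.2
  calc Nat.card (commutatorSet G) ≤ Nat.card ((G ⧸ center G) × (G ⧸ center G)) :=
        Nat.card_le_card_of_surjective _ hsurj
    _ = (center G).index ^ 2 := by rw [Nat.card_prod, sq, index]

theorem card_commutator_le_of_index_center_le [Finite G] {N : ℕ} (hN : (center G).index ≤ N) :
    Nat.card (_root_.commutator G) ≤ N ^ (N * N ^ 2 + 1) := by
  set k := (center G).index
  have hk : 1 ≤ k := Nat.one_le_iff_ne_zero.mpr FiniteIndex.index_ne_zero
  have hcs := card_commutatorSet_le_index_center_sq (G := G)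
  calc Nat.card (_root_.commutator G) ≤ k ^ (k * Nat.card (commutatorSet G) + 1) :=
        Nat.le_of_dvd (by positivity) (card_commutator_dvd_index_center_pow G)
    _ ≤ N ^ (N * N ^ 2 + 1) := by
        gcongr
        · exact hk.trans hN
        · exact hcs.trans (Nat.pow_le_pow_left hN 2)

theorem card_ker_powMonoidHom_le {A : Type*} [CommGroup A] [Finite A] (C : Subgroup A)
    [IsCyclic C] {q : ℕ} (hq : 0 < q) :
    Nat.card (powMonoidHom q : A →* A).ker ≤ C.index * q := by
  set B := (powMonoidHom q : A →* A).ker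
  have hCB : Nat.card (C.subgroupOf B) = Nat.card (C ⊓ B : Subgroup A) := by
    rw [← inf_subgroupOf_right]
    exact Nat.card_congr (subgroupOfEquivOfLe inf_le_right).toEquiv
  have : IsCyclic (C ⊓ B : Subgroup A) := isCyclic_of_le inf_le_left
  have hexp : Nat.card (C ⊓ B : Subgroup A) ∣ q := by
    rw [← IsCyclic.exponent_eq_card]
    exact Monoid.exponent_dvd_of_forall_pow_eq_one fun g => Subtype.ext g.2.2
  have hrel : C.relIndex B ≤ C.index :=
    Nat.le_of_dvd (Nat.pos_of_ne_zero FiniteIndex.index_ne_zero) (relIndex_dvd_index_of_normal C B)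
  calc Nat.card B = C.relIndex B * Nat.card (C.subgroupOf B) := (index_mul_card _).symm
    _ ≤ C.index * q := Nat.mul_le_mul hrel (hCB ▸ Nat.le_of_dvd hq hexp)

theorem card_comap_of_surjective {H : Type*} [Group H] [Finite G] {f : G →* H}
    (hf : Function.Surjective f) (K : Subgroup H) :
    Nat.card (K.comap f) = Nat.card f.ker * Nat.card K := by
  have : Finite H := Finite.of_surjective f hf
  have hK : K.index ≠ 0 := FiniteIndex.index_ne_zero
  refine Nat.eq_of_mul_eq_mul_right (Nat.pos_of_ne_zero hK) ?_
  rw [← index_comap_of_surjective K hf, card_mul_index, index_comap_of_surjective K hf,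
    mul_assoc, card_mul_index, ← card_mul_index f.ker, index_ker,
    (MonoidHom.range_eq_top_of_surjective f hf), card_top]

theorem isCyclic_quotient_ker_of_range_le {H : Type*} [Group H] {f : G →* H} {K : Subgroup H}
    [IsCyclic K] (hf : f.range ≤ K) : IsCyclic (G ⧸ f.ker) :=
  have : IsCyclic f.range := isCyclic_of_le hf
  isCyclic_of_surjective (QuotientGroup.quotientKerEquivRange f).symm
    (QuotientGroup.quotientKerEquivRange f).symm.surjective

end Subgroup

theorem Abelianization.of_surjective {G : Type*} [Group G] :
    Function.Surjective (of : G →* Abelianization G) :=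
  QuotientGroup.mk_surjective

open Subgroup in
theorem stmt_11 :
    ∃ f : ℕ → ℕ, ∀ (G : Type) [Group G] [Finite G] (m : ℕ) (C : Fin m → Subgroup G),
      (∀ i, IsCyclic (C i)) → (∀ g : G, ∃ i, g ∈ C i) →
      ∃ (Δ : Subgroup G) (hΔ : Δ.Normal), Nat.card Δ ≤ f m ∧
        (letI := hΔ; IsCyclic (G ⧸ Δ)) := by
  refine ⟨fun m => ((2 * m) ^ m) ^ ((2 * m) ^ m * ((2 * m) ^ m) ^ 2 + 1) * m ^ 2, ?_⟩
  intro G _ _ m C hcyc hcov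
  let π : G →* Abelianization G := Abelianization.of
  obtain ⟨j, hj⟩ := exists_index_le_card_of_cover (H := fun i => (C i).map π) fun a => by
    obtain ⟨g, rfl⟩ := Abelianization.of_surjective a
    obtain ⟨i, hi⟩ := hcov g
    exact ⟨i, mem_map_of_mem π hi⟩
  set D := (C j).map π
  have : IsCyclic D := isCyclic_of_surjective _ (π.subgroupMap_surjective (C j))
  set ψ := (powMonoidHom D.index).comp π
  refine ⟨ψ.ker, inferInstance, ?_, isCyclic_quotient_ker_of_range_le (K := D) ?_⟩
  · have hcenter := index_center_le_of_cover hcov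
    rw [Fintype.card_fin] at hcenter hj
    have hD : D.index * D.index ≤ m ^ 2 := by rw [sq]; exact Nat.mul_le_mul hj hj
    calc Nat.card ψ.ker
        = Nat.card (_root_.commutator G) *
            Nat.card (powMonoidHom D.index : Abelianization G →* Abelianization G).ker := by
          rw [← MonoidHom.comap_ker, card_comap_of_surjective Abelianization.of_surjective,
            Abelianization.ker_of]
      _ ≤ ((2 * m) ^ m) ^ ((2 * m) ^ m * ((2 * m) ^ m) ^ 2 + 1) * m ^ 2 :=
          Nat.mul_le_mul (card_commutator_le_of_index_center_le hcenter)
            ((card_ker_powMonoidHom_le D (Nat.pos_of_ne_zero FiniteIndex.index_ne_zero)).trans hD)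
  · rintro - ⟨g, rfl⟩
    exact pow_index_mem D (π g)
end
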